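/- Fix reals L < U and t > 0, and set μ = U − L + 2t. Let r_1, …, r_s be i.i.d. random variables uniformly distributed on [L − t, U + t]. For x, y ∈ [L, U] with |x − y| ≤ 2t, let d_H = d_H(BV(x), BV(y)) be the Hamming distance between the BV encodings of x and y. Then E[μ · d_H / (2s)] = |x − y|; that is, the estimator μ · d_H / (2s) of the Euclidean distance is unbiased within the local view. -/

import Mathlib

open MeasureTheory ProbabilityTheory

/-- The BV hash: `h_{r,t}(x) = 1` if `x ∈ [r - t, r + t]` and `0` otherwise. -/
noncomputable def bvHash (t r x : ℝ) : ℕ := if x ∈ Set.Icc (r - t) (r + t) then 1 else 0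

/-- The uniform probability measure on the interval `[a, b]`. -/
noncomputable def uniformIcc (a b : ℝ) : Measure ℝ :=
  (ENNReal.ofReal (b - a))⁻¹ • (volume.restrict (Set.Icc a b))

/-- The (random) Hamming distance between the BV encodings of `x` and `y`:
the number of coordinates in which they differ. -/
noncomputable def bvHammingDist (t : ℝ) {s : ℕ} {Ω : Type*} (r : Fin s → Ω → ℝ)
    (x y : ℝ) (ω : Ω) : ℕ :=
  (Finset.univ.filter fun i => bvHash t (r i ω) x ≠ bvHash t (r i ω) y).card

/-! The hashes of `x` and `y` at `r` differ exactly when `r` lies in the symmetric difference of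
the windows `[x - t, x + t]` and `[y - t, y + t]`. For `|x - y| ≤ 2t` this set has length
`2 |x - y|` and lies inside `[L - t, U + t]`, so each coordinate of the encodings disagrees with
probability `2 |x - y| / μ`, and linearity of expectation gives `E[d_H] = 2 s |x - y| / μ`. -/

open Set Finset
open scoped symmDiff

theorem measureReal_symmDiff_eq_add_sub_inter {α : Type*} [MeasurableSpace α] {μ : Measure α}
    {s t : Set α} (hs : MeasurableSet s) (ht : MeasurableSet t) (h₁ : μ s ≠ ⊤) (h₂ : μ t ≠ ⊤) :
    μ.real (s ∆ t) = μ.real s + μ.real t - 2 * μ.real (s ∩ t) := by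
  have hst := measureReal_sdiff_add_inter ht h₁
  have hts := measureReal_sdiff_add_inter hs h₂
  rw [Set.inter_comm] at hts
  rw [measureReal_symmDiff_eq hs ht h₁ h₂]
  linarith

theorem integral_card_filter_mem {ι Ω : Type*} [Fintype ι] [MeasurableSpace Ω]
    (P : Measure Ω) [IsFiniteMeasure P] {E : ι → Set Ω} [∀ i, DecidablePred (· ∈ E i)]
    (hE : ∀ i, MeasurableSet (E i)) :
    ∫ ω, (#{i | ω ∈ E i} : ℝ) ∂P = ∑ i, P.real (E i) := by
  have hcard (ω : Ω) : (#{i | ω ∈ E i} : ℝ) = ∑ i, (E i).indicator 1 ω := by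
    rw [Finset.card_filter]
    push_cast
    simp [Set.indicator_apply]
  simp_rw [hcard]
  rw [integral_finsetSum _ fun i _ ↦ (integrable_const 1).indicator (hE i)]
  simp_rw [integral_indicator_one (hE _)]

theorem volume_real_Icc_symmDiff_Icc {x y t : ℝ} (h : |x - y| ≤ 2 * t) :
    volume.real (Icc (x - t) (x + t) ∆ Icc (y - t) (y + t)) = 2 * |x - y| := by
  have hlen (z : ℝ) : volume.real (Icc (z - t) (z + t)) = 2 * t :=
    (Real.volume_real_Icc_of_le (by linarith [abs_nonneg (x - y)])).trans (by ring)
  rw [measureReal_symmDiff_eq_add_sub_inter measurableSet_Icc measurableSet_Icc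
    measure_Icc_lt_top.ne measure_Icc_lt_top.ne, hlen, hlen, Icc_inter_Icc, max_sub_sub_right,
    min_add_add_right, Real.volume_real_Icc_of_le (by linarith [max_sub_min_eq_abs' x y]),
    ← max_sub_min_eq_abs']
  ring

theorem uniformIcc_real_of_subset {a b : ℝ} (hab : a ≤ b) {D : Set ℝ} (hD : D ⊆ Icc a b) :
    (uniformIcc a b).real D = volume.real D / (b - a) := by
  rw [uniformIcc, measureReal_ennreal_smul_apply, measureReal_restrict_apply' measurableSet_Icc,
    inter_eq_self_of_subset_left hD, ENNReal.toReal_inv, ENNReal.toReal_ofReal (sub_nonneg.2 hab),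
    inv_mul_eq_div]

theorem bvHash_ne_bvHash_iff (t r x y : ℝ) :
    bvHash t r x ≠ bvHash t r y ↔ r ∈ Icc (x - t) (x + t) ∆ Icc (y - t) (y + t) := by
  have mem_comm (z : ℝ) : z ∈ Icc (r - t) (r + t) ↔ r ∈ Icc (z - t) (z + t) := by
    simp only [Set.mem_Icc]
    constructor <;> rintro ⟨h₁, h₂⟩ <;> constructor <;> linarith
  simp only [bvHash, mem_comm, Set.mem_symmDiff]
  split_ifs <;> simp_all

theorem bvHammingDist_eq_card {s : ℕ} {Ω : Type*} (t : ℝ) (r : Fin s → Ω → ℝ) (x y : ℝ) (ω : Ω)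
    [DecidablePred (· ∈ Icc (x - t) (x + t) ∆ Icc (y - t) (y + t))] :
    bvHammingDist t r x y ω = #{i | r i ω ∈ Icc (x - t) (x + t) ∆ Icc (y - t) (y + t)} := by
  simp only [bvHammingDist, bvHash_ne_bvHash_iff]

theorem bv_distance_estimator_unbiased_general
    {Ω : Type*} [MeasurableSpace Ω] (P : Measure Ω) [IsProbabilityMeasure P]
    (L U t μ : ℝ) (ht : 0 < t) (hμ : μ = U - L + 2 * t)
    (s : ℕ) (hs : 1 ≤ s) (r : Fin s → Ω → ℝ) (hr : ∀ i, Measurable (r i))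
    (hlaw : ∀ i, Measure.map (r i) P = uniformIcc (L - t) (U + t))
    (x y : ℝ) (hx : x ∈ Set.Icc L U) (hy : y ∈ Set.Icc L U)
    (hxy : |x - y| ≤ 2 * t) :
    ∫ ω, μ * (bvHammingDist t r x y ω : ℝ) / (2 * s) ∂P = |x - y| := by
  set D := Icc (x - t) (x + t) ∆ Icc (y - t) (y + t)
  have hD : MeasurableSet D := measurableSet_Icc.symmDiff measurableSet_Icc
  have hDsub : D ⊆ Icc (L - t) (U + t) :=
    symmDiff_subset_union.trans <| union_subset
      (Icc_subset_Icc (by linarith [hx.1]) (by linarith [hx.2]))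
      (Icc_subset_Icc (by linarith [hy.1]) (by linarith [hy.2]))
  have hμpos : 0 < μ := by linarith [hx.1, hx.2]
  have hprob (i : Fin s) : P.real (r i ⁻¹' D) = 2 * |x - y| / μ := by
    rw [← map_measureReal_apply (hr i) hD, hlaw i,
      uniformIcc_real_of_subset (by linarith) hDsub, volume_real_Icc_symmDiff_Icc hxy, hμ]
    ring
  have hs0 : (s : ℝ) ≠ 0 := Nat.cast_ne_zero.2 (by omega)
  classical
  calc ∫ ω, μ * (bvHammingDist t r x y ω : ℝ) / (2 * s) ∂P
      = μ / (2 * s) * ∫ ω, (#{i | ω ∈ r i ⁻¹' D} : ℝ) ∂P := by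
        simp_rw [bvHammingDist_eq_card, mul_div_right_comm μ, integral_const_mul]
        rfl
    _ = |x - y| := by
        rw [integral_card_filter_mem P fun i ↦ hr i hD]
        simp only [hprob, Finset.sum_const, Finset.card_univ, Fintype.card_fin, nsmul_eq_mul]
        field_simp

/-- For `L < U`, `t > 0`, `μ = U - L + 2t`, `r 0, …, r (s-1)` i.i.d. uniform on
`[L - t, U + t]`, and `x, y ∈ [L, U]` with `|x - y| ≤ 2t`, the estimator `μ · d_H / (2s)` of the
Euclidean distance is unbiased: `E[μ · d_H / (2s)] = |x - y|`. -/
theorem bv_distance_estimator_unbiased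
    {Ω : Type*} [MeasurableSpace Ω] (P : Measure Ω) [IsProbabilityMeasure P]
    (L U t μ : ℝ) (hLU : L < U) (ht : 0 < t) (hμ : μ = U - L + 2 * t)
    (s : ℕ) (hs : 1 ≤ s) (r : Fin s → Ω → ℝ) (hr : ∀ i, Measurable (r i))
    (hlaw : ∀ i, Measure.map (r i) P = uniformIcc (L - t) (U + t))
    (hindep : iIndepFun r P)
    (x y : ℝ) (hx : x ∈ Set.Icc L U) (hy : y ∈ Set.Icc L U)
    (hxy : |x - y| ≤ 2 * t) :
    ∫ ω, μ * (bvHammingDist t r x y ω : ℝ) / (2 * s) ∂P = |x - y| :=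
  bv_distance_estimator_unbiased_general P L U t μ ht hμ s hs r hr hlaw x y hx hy hxy
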